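/- arXiv:2301.00902 — 5 statements merged into one kernel-verified Lean document; each statement's English description precedes it below -/
import Mathlib

section
/- Let N ≥ 3 be an integer and θ_1,…,θ_N ∈ (−π,π)∖{0} with ∑_{k=1}^N θ_k = 2π, and let λ ∈ ℝ^{N−2}. With λ_{N−1} := vᵀλ, the triangulated signed area of the planar N-gon with side vectors λ_k e^{−iφ_k} equals the signed-area quadratic form: −(1/2)·∑_{k=1}^{N−2} cross( ∑_{j=1}^{k} λ_j e^{−iφ_j} , λ_{k+1} e^{−iφ_{k+1}} ) = Q(λ), where cross(z,w) := Re(z)·Im(w) − Im(z)·Re(w) for z,w ∈ ℂ ≅ ℝ², and where in the term k = N−2 the symbol λ_{N−1} denotes vᵀλ. -/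
/-- The cumulative angle `φ_k = ∑_{a=1}^k θ_a`. -/
noncomputable def phiAng (θ : ℕ → ℝ) (k : ℕ) : ℝ := ∑ a ∈ Finset.Icc 1 k, θ a

/-- The signed-area quadratic form `Q` on `ℝ^{N-2}` (coordinates indexed `1,…,N-2`). -/
noncomputable def Qform (N : ℕ) (θ : ℕ → ℝ) (lam : ℕ → ℝ) : ℝ :=
  -(1/2) * ∑ j ∈ Finset.Icc 1 (N-2),
      Real.sin (phiAng θ N - phiAng θ j) * Real.sin (phiAng θ (N-1) - phiAng θ j)
        / Real.sin (θ N) * (lam j)^2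
  - ∑ j ∈ Finset.Icc 1 (N-2), ∑ k ∈ Finset.Icc (j+1) (N-2),
      Real.sin (phiAng θ N - phiAng θ j) * Real.sin (phiAng θ (N-1) - phiAng θ k)
        / Real.sin (θ N) * (lam j * lam k)

/-- The vector `v`, `v_j = -sin(φ_N - φ_j)/sin(θ_N)`. -/
noncomputable def vvec (N : ℕ) (θ : ℕ → ℝ) (j : ℕ) : ℝ :=
  -(Real.sin (phiAng θ N - phiAng θ j)) / Real.sin (θ N)

/-- The vector `w`, `w_j = sin(φ_{N-1} - φ_j)/sin(θ_N)`. -/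
noncomputable def wvec (N : ℕ) (θ : ℕ → ℝ) (j : ℕ) : ℝ :=
  Real.sin (phiAng θ (N-1) - phiAng θ j) / Real.sin (θ N)

/-- The extended side lengths: `λ_k` for `k ≤ N-2`, `λ_{N-1} = vᵀλ`, `λ_N = wᵀλ`. -/
noncomputable def lamExt (N : ℕ) (θ : ℕ → ℝ) (lam : ℕ → ℝ) (k : ℕ) : ℝ :=
  if k = N - 1 then ∑ j ∈ Finset.Icc 1 (N-2), vvec N θ j * lam j
  else if k = N then ∑ j ∈ Finset.Icc 1 (N-2), wvec N θ j * lam j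
  else lam k

/-- The planar cross product of two complex numbers viewed as vectors in `ℝ²`. -/
def cross (z w : ℂ) : ℝ := z.re * w.im - z.im * w.re

lemma exp_neg_re (a : ℝ) : (Complex.exp (-(a:ℂ) * Complex.I)).re = Real.cos a := by
  rw [show (-(a:ℂ)) * Complex.I = ((-a : ℝ) : ℂ) * Complex.I by push_cast; ring,
    Complex.exp_ofReal_mul_I_re, Real.cos_neg]

lemma exp_neg_im (a : ℝ) : (Complex.exp (-(a:ℂ) * Complex.I)).im = -Real.sin a := by
  rw [show (-(a:ℂ)) * Complex.I = ((-a : ℝ) : ℂ) * Complex.I by push_cast; ring,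
    Complex.exp_ofReal_mul_I_im, Real.sin_neg]

lemma cross_eval (x y a b : ℝ) :
    cross ((x:ℂ) * Complex.exp (-(a:ℂ) * Complex.I)) ((y:ℂ) * Complex.exp (-(b:ℂ) * Complex.I))
    = x * y * Real.sin (a - b) := by
  simp only [cross, Complex.mul_re, Complex.mul_im, exp_neg_re, exp_neg_im,
    Complex.ofReal_re, Complex.ofReal_im, Real.sin_sub]
  ring

lemma cross_sum_left (s : Finset ℕ) (f : ℕ → ℂ) (w : ℂ) :
    cross (∑ j ∈ s, f j) w = ∑ j ∈ s, cross (f j) w := by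
  simp [cross, Complex.re_sum, Complex.im_sum, Finset.sum_mul, Finset.sum_sub_distrib]

lemma tri_swap (F : ℕ → ℕ → ℝ) (m : ℕ) :
    ∑ k ∈ Finset.Icc 1 m, ∑ j ∈ Finset.Icc 1 k, F j (k+1)
      = ∑ j ∈ Finset.Icc 1 (m+1), ∑ k ∈ Finset.Icc (j+1) (m+1), F j k := by
  induction m with
  | zero => simp
  | succ n ih =>
    rw [Finset.sum_Icc_succ_top (by omega : 1 ≤ n+1), ih,
      Finset.sum_Icc_succ_top (show (1:ℕ) ≤ n+2 by omega)]
    rw [show Finset.Icc (n+2+1) (n+2) = ∅ by rw [Finset.Icc_eq_empty]; omega]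
    rw [Finset.sum_empty, add_zero, ← Finset.sum_add_distrib]
    refine Finset.sum_congr rfl fun j hj => ?_
    rw [Finset.sum_Icc_succ_top (show j+1 ≤ n+2 by simp at hj; omega)]

lemma square_split (g : ℕ → ℕ → ℝ) (n : ℕ) :
    ∑ i ∈ Finset.Icc 1 n, ∑ j ∈ Finset.Icc 1 n, g i j
      = ∑ j ∈ Finset.Icc 1 n, g j j
        + ∑ j ∈ Finset.Icc 1 n, ∑ k ∈ Finset.Icc (j+1) n, (g j k + g k j) := by
  induction n with
  | zero => simp
  | succ n ih =>
    rw [Finset.sum_Icc_succ_top (show (1:ℕ) ≤ n+1 by omega)]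
    have hrow : ∀ i, ∑ j ∈ Finset.Icc 1 (n+1), g i j
        = ∑ j ∈ Finset.Icc 1 n, g i j + g i (n+1) :=
      fun i => Finset.sum_Icc_succ_top (by omega) _
    simp only [hrow]
    rw [Finset.sum_add_distrib, ih,
      Finset.sum_Icc_succ_top (show (1:ℕ) ≤ n+1 by omega) (fun j => g j j),
      Finset.sum_Icc_succ_top (show (1:ℕ) ≤ n+1 by omega)
        (fun j => ∑ k ∈ Finset.Icc (j+1) (n+1), (g j k + g k j))]
    rw [show Finset.Icc (n+1+1) (n+1) = ∅ by rw [Finset.Icc_eq_empty]; omega,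
      Finset.sum_empty]
    have hinner : ∀ j ∈ Finset.Icc 1 n, ∑ k ∈ Finset.Icc (j+1) (n+1), (g j k + g k j)
        = ∑ k ∈ Finset.Icc (j+1) n, (g j k + g k j) + (g j (n+1) + g (n+1) j) :=
      fun j hj => Finset.sum_Icc_succ_top (by simp at hj; omega) _
    rw [Finset.sum_congr rfl hinner, Finset.sum_add_distrib, Finset.sum_add_distrib]
    ring


lemma square_split' (g : ℕ → ℕ → ℝ) (n : ℕ) :
    ∑ j ∈ Finset.Icc 1 n, ∑ i ∈ Finset.Icc 1 n, g i j
      = ∑ j ∈ Finset.Icc 1 n, g j j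
        + ∑ j ∈ Finset.Icc 1 n, ∑ k ∈ Finset.Icc (j+1) n, (g j k + g k j) := by
  rw [Finset.sum_comm]
  exact square_split g n



/-- The triangulated signed area of the planar `N`-gon with side vectors `λ_k e^{-iφ_k}`
(with `λ_{N-1} := vᵀλ`) equals the signed-area quadratic form `Q(λ)`. -/
theorem stmt0 (N : ℕ) (hN : 3 ≤ N) (θ lam : ℕ → ℝ)
    (hθ : ∀ k, 1 ≤ k → k ≤ N → θ k ∈ Set.Ioo (-Real.pi) Real.pi ∧ θ k ≠ 0)
    (hsum : ∑ k ∈ Finset.Icc 1 N, θ k = 2 * Real.pi) :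
    -(1/2) * ∑ k ∈ Finset.Icc 1 (N-2),
        cross
          (∑ j ∈ Finset.Icc 1 k,
            (lamExt N θ lam j : ℂ) * Complex.exp (-(phiAng θ j : ℂ) * Complex.I))
          ((lamExt N θ lam (k+1) : ℂ) * Complex.exp (-(phiAng θ (k+1) : ℂ) * Complex.I))
      = Qform N θ lam := by
  obtain ⟨m, rfl⟩ : ∃ m, N = m + 3 := ⟨N - 3, by omega⟩
  obtain ⟨hIoo, hne⟩ := hθ (m+3) (by omega) le_rfl
  have hs : Real.sin (θ (m+3)) ≠ 0 := by
    rw [ne_eq, Real.sin_eq_zero_iff_of_lt_of_lt hIoo.1 hIoo.2]; exact hne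
  have h2 : m + 3 - 2 = m + 1 := rfl
  have h1 : m + 3 - 1 = m + 2 := rfl
  have hAB : phiAng θ (m+3) - phiAng θ (m+2) = θ (m+3) := by
    simp [phiAng, Finset.sum_Icc_succ_top (show (1:ℕ) ≤ m+3 by omega)]
  have key : ∀ a b : ℝ, Real.sin (a - b) * Real.sin (θ (m+3))
      = Real.sin (phiAng θ (m+3) - a) * Real.sin (phiAng θ (m+2) - b)
        - Real.sin (phiAng θ (m+3) - b) * Real.sin (phiAng θ (m+2) - a) := by
    intro a b
    rw [← hAB]
    simp only [Real.sin_sub, Real.cos_sub]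
    ring
  set g : ℕ → ℕ → ℝ := fun i j =>
    Real.sin (phiAng θ (m+3) - phiAng θ i) * Real.sin (phiAng θ (m+2) - phiAng θ j)
      / Real.sin (θ (m+3)) * (lam i * lam j) with hg
  set G : ℕ → ℕ → ℝ := fun a b => g a b - g b a with hG
  have hLsmall : ∀ j, j ≤ m+1 → lamExt (m+3) θ lam j = lam j := by
    intro j hj
    unfold lamExt
    rw [if_neg (by omega), if_neg (by omega)]
  have hLtop : lamExt (m+3) θ lam (m+2)
      = ∑ j ∈ Finset.Icc 1 (m+1), vvec (m+3) θ j * lam j := by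
    unfold lamExt
    rw [if_pos (show m+2 = m+3-1 from rfl), h2]
  have hcross : ∀ k ∈ Finset.Icc 1 (m+3-2),
      cross
        (∑ j ∈ Finset.Icc 1 k,
          (lamExt (m+3) θ lam j : ℂ) * Complex.exp (-(phiAng θ j : ℂ) * Complex.I))
        ((lamExt (m+3) θ lam (k+1) : ℂ) * Complex.exp (-(phiAng θ (k+1) : ℂ) * Complex.I))
      = ∑ j ∈ Finset.Icc 1 k,
          lam j * lamExt (m+3) θ lam (k+1) * Real.sin (phiAng θ j - phiAng θ (k+1)) := by
    intro k hk
    simp only [Finset.mem_Icc, h2] at hk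
    rw [cross_sum_left]
    refine Finset.sum_congr rfl fun j hj => ?_
    simp only [Finset.mem_Icc] at hj
    rw [cross_eval, hLsmall j (by omega)]
  rw [Finset.sum_congr rfl hcross]
  rw [h2, Finset.sum_Icc_succ_top (show (1:ℕ) ≤ m+1 by omega)]
  simp only [show m+1+1 = m+2 from rfl]
  have hmain : ∀ k ∈ Finset.Icc 1 m,
      ∑ j ∈ Finset.Icc 1 k,
          lam j * lamExt (m+3) θ lam (k+1) * Real.sin (phiAng θ j - phiAng θ (k+1))
      = ∑ j ∈ Finset.Icc 1 k, G j (k+1) := by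
    intro k hk
    simp only [Finset.mem_Icc] at hk
    refine Finset.sum_congr rfl fun j hj => ?_
    rw [hLsmall (k+1) (by omega)]
    have hsin : Real.sin (phiAng θ j - phiAng θ (k+1))
        = (Real.sin (phiAng θ (m+3) - phiAng θ j) * Real.sin (phiAng θ (m+2) - phiAng θ (k+1))
          - Real.sin (phiAng θ (m+3) - phiAng θ (k+1)) * Real.sin (phiAng θ (m+2) - phiAng θ j))
          / Real.sin (θ (m+3)) := by
      rw [eq_div_iff hs]
      exact key _ _
    simp only [hG, hg]
    rw [hsin]
    ring
  have htop : ∑ j ∈ Finset.Icc 1 (m+1),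
      lam j * lamExt (m+3) θ lam (m+2) * Real.sin (phiAng θ j - phiAng θ (m+2))
      = ∑ j ∈ Finset.Icc 1 (m+1), ∑ i ∈ Finset.Icc 1 (m+1), g i j := by
    refine Finset.sum_congr rfl fun j hj => ?_
    rw [hLtop, Finset.mul_sum, Finset.sum_mul]
    refine Finset.sum_congr rfl fun i hi => ?_
    unfold vvec
    simp only [hg]
    rw [show phiAng θ j - phiAng θ (m+2) = -(phiAng θ (m+2) - phiAng θ j) by ring,
      Real.sin_neg]
    ring
  rw [Finset.sum_congr rfl hmain, htop, tri_swap G m, square_split' g (m+1)]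
  unfold Qform
  rw [h2, h1]
  have hdiag : ∀ j ∈ Finset.Icc 1 (m+1),
      Real.sin (phiAng θ (m+3) - phiAng θ j) * Real.sin (phiAng θ (m+2) - phiAng θ j)
        / Real.sin (θ (m+3)) * (lam j)^2 = g j j := by
    intro j hj; simp only [hg]; ring
  have hoff : ∀ j ∈ Finset.Icc 1 (m+1),
      ∑ k ∈ Finset.Icc (j+1) (m+1),
        Real.sin (phiAng θ (m+3) - phiAng θ j) * Real.sin (phiAng θ (m+2) - phiAng θ k)
          / Real.sin (θ (m+3)) * (lam j * lam k)
      = ∑ k ∈ Finset.Icc (j+1) (m+1), g j k := by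
    intro j hj
    exact Finset.sum_congr rfl fun k hk => by simp only [hg]
  rw [Finset.sum_congr rfl hdiag, Finset.sum_congr rfl hoff]
  have hcomb : ∑ j ∈ Finset.Icc 1 (m+1), ∑ k ∈ Finset.Icc (j+1) (m+1), G j k
      + ∑ j ∈ Finset.Icc 1 (m+1), ∑ k ∈ Finset.Icc (j+1) (m+1), (g j k + g k j)
      = 2 * ∑ j ∈ Finset.Icc 1 (m+1), ∑ k ∈ Finset.Icc (j+1) (m+1), g j k := by
    rw [← Finset.sum_add_distrib, Finset.mul_sum]
    refine Finset.sum_congr rfl fun j hj => ?_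
    rw [← Finset.sum_add_distrib, Finset.mul_sum]
    refine Finset.sum_congr rfl fun k hk => ?_
    simp only [hG]
    ring
  linarith [hcomb]
end

section
/- Let N ≥ 3 be an integer and θ_1,…,θ_N real with ∑_{k=1}^N θ_k = 2π and sin(θ_N) ≠ 0, and let λ ∈ ℝ^N satisfy the closing condition ∑_{k=1}^N λ_k e^{−iφ_k} = 0. Let σ be a cyclic permutation of {1,…,N} (i.e., σ(j) ≡ j + m (mod N) for some m, with representatives in {1,…,N}) such that sin(φ_{σ(N)} − φ_{σ(N−1)}) ≠ 0. Then −(1/2)∑_{1≤j≤N−2} [sin(φ_{σ(N)}−φ_{σ(j)})·sin(φ_{σ(N−1)}−φ_{σ(j)}) / sin(φ_{σ(N)}−φ_{σ(N−1)})]·λ_{σ(j)}² − ∑_{1≤j<k≤N−2} [sin(φ_{σ(N)}−φ_{σ(j)})·sin(φ_{σ(N−1)}−φ_{σ(k)}) / sin(φ_{σ(N)}−φ_{σ(N−1)})]·λ_{σ(j)}·λ_{σ(k)} = Q((λ_1,…,λ_{N−2})); i.e., the signed-area formula is invariant under cyclic relabelling of the polygon's vertices. -/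
open Finset Real

lemma sum_mul_sin_sub_eq_zero_of_sum_mul_exp_eq_zero {ι : Type*} (s : Finset ι) (ψ μ : ι → ℝ)
    (h : ∑ k ∈ s, (μ k : ℂ) * Complex.exp (-(ψ k : ℂ) * Complex.I) = 0) (t : ℝ) :
    ∑ k ∈ s, μ k * sin (t - ψ k) = 0 := by
  have := congrArg (fun z => (Complex.exp (t * Complex.I) * z).im) h
  simp only [mul_sum, Complex.im_sum, mul_zero, Complex.zero_im] at this
  rw [← this]
  refine sum_congr rfl fun k _ => ?_
  rw [mul_left_comm, ← Complex.exp_add, Complex.im_ofReal_mul,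
    show (t : ℂ) * Complex.I + -(ψ k : ℂ) * Complex.I = ((t - ψ k : ℝ) : ℂ) * Complex.I by
      push_cast; ring, Complex.exp_ofReal_mul_I_im]

lemma sin_sub_mul_sin_sub_sub_sin_sub_mul_sin_sub (x y u v : ℝ) :
    sin (x - u) * sin (y - v) - sin (x - v) * sin (y - u) = sin (x - y) * sin (u - v) := by
  simp only [sin_sub]
  ring

lemma sum_Icc_eq_add_top_two {M : Type*} [AddCommMonoid M] {N a : ℕ} (hN : 2 ≤ N)
    (ha : a ≤ N - 1) (f : ℕ → M) :
    ∑ k ∈ Icc a N, f k = ∑ k ∈ Icc a (N - 2), f k + f (N - 1) + f N := by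
  obtain ⟨n, rfl⟩ : ∃ n, N = n + 2 := ⟨N - 2, by omega⟩
  rw [sum_Icc_succ_top (by omega), sum_Icc_succ_top (by omega)]
  simp

lemma sum_sum_Icc_succ_eq_add_top_two {M : Type*} [AddCommMonoid M] {N : ℕ} (hN : 2 ≤ N)
    (F : ℕ → ℕ → M) :
    ∑ j ∈ Icc 1 N, ∑ k ∈ Icc (j + 1) N, F j k
      = ∑ j ∈ Icc 1 (N - 2), ∑ k ∈ Icc (j + 1) (N - 2), F j k
        + ∑ j ∈ Icc 1 (N - 2), (F j (N - 1) + F j N) + F (N - 1) N := by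
  obtain ⟨n, rfl⟩ : ∃ n, N = n + 2 := ⟨N - 2, by omega⟩
  rw [sum_Icc_eq_add_top_two hN (by omega)]
  simp only [Nat.add_sub_cancel, Nat.add_one_sub_one]
  have hrow : ∀ j ∈ Icc 1 n, ∑ k ∈ Icc (j + 1) (n + 2), F j k
      = ∑ k ∈ Icc (j + 1) n, F j k + (F j (n + 1) + F j (n + 2)) := fun j hj => by
    rw [sum_Icc_eq_add_top_two hN (by simp only [mem_Icc] at hj; omega), add_assoc]
    simp
  rw [sum_congr rfl hrow, sum_add_distrib, Icc_self (n + 2),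
    Icc_eq_empty_of_lt (Nat.lt_succ_self (n + 2))]
  simp [add_assoc]

lemma sum_sum_Icc_succ_eq_sum_ite {M : Type*} [AddCommMonoid M] (N : ℕ) (F : ℕ → ℕ → M) :
    ∑ j ∈ Icc 1 N, ∑ k ∈ Icc (j + 1) N, F j k
      = ∑ j ∈ Icc 1 N, ∑ k ∈ Icc 1 N, if j < k then F j k else 0 := by
  refine sum_congr rfl fun j _ => ?_
  rw [← sum_filter]
  congr 1
  ext k
  simp only [mem_Icc, mem_filter]
  omega

lemma sum_mul_sum_Icc_eq_diag_add_lt (n : ℕ) (x y : ℕ → ℝ) :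
    (∑ j ∈ Icc 1 n, x j) * ∑ k ∈ Icc 1 n, y k
      = ∑ j ∈ Icc 1 n, x j * y j
        + ∑ j ∈ Icc 1 n, ∑ k ∈ Icc (j + 1) n, (x j * y k + x k * y j) := by
  have hdiag : ∑ j ∈ Icc 1 n, x j * y j
      = ∑ j ∈ Icc 1 n, ∑ k ∈ Icc 1 n, if j = k then x j * y k else 0 := by
    refine sum_congr rfl fun j hj => ?_
    rw [sum_ite_eq, if_pos hj]
  rw [sum_mul_sum, sum_sum_Icc_succ_eq_sum_ite, hdiag]
  simp only [ite_add_zero, sum_add_distrib]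
  rw [sum_comm (f := fun j k => if j < k then x k * y j else 0), ← sum_add_distrib,
    ← sum_add_distrib]
  refine sum_congr rfl fun j _ => ?_
  rw [← sum_add_distrib, ← sum_add_distrib]
  refine sum_congr rfl fun k _ => ?_
  split_ifs <;> first | omega | ring

lemma sum_sum_sub_mul_eq_zero {ι : Type*} (s : Finset ι) (w : ι → ℝ) (g : ι → ι → ℝ)
    (hrow : ∀ j, ∑ k ∈ s, g j k = 0) (hcol : ∀ k, ∑ j ∈ s, g j k = 0) :
    ∑ j ∈ s, ∑ k ∈ s, (w k - w j) * g j k = 0 := by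
  simp only [sub_mul, sum_sub_distrib, ← mul_sum,
    sum_comm (s := s) (t := s) (f := fun j k => w k * g j k)]
  simp [hrow, hcol]

def cyclicShift (N m j : ℕ) : ℕ := (j + m - 1) % N + 1

lemma cyclicShift_eq {N : ℕ} (m : ℕ) {j : ℕ} (hj : j ∈ Icc 1 N) :
    cyclicShift N m j = if j + m % N ≤ N then j + m % N else j + m % N - N := by
  rw [mem_Icc] at hj
  have hr : m % N < N := Nat.mod_lt _ (by omega)
  have e : j + m - 1 = (j - 1 + m % N) + N * (m / N) := by
    have := Nat.mod_add_div m N; omega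
  rw [cyclicShift, e, Nat.add_mul_mod_self_left]
  split_ifs
  · rw [Nat.mod_eq_of_lt (by omega)]; omega
  · rw [Nat.mod_eq_sub_mod (by omega), Nat.mod_eq_of_lt (by omega)]; omega

lemma sum_comp_cyclicShift {M : Type*} [AddCommMonoid M] {N : ℕ} (hN : 0 < N) (m : ℕ)
    (g : ℕ → M) : ∑ k ∈ Icc 1 N, g (cyclicShift N m k) = ∑ k ∈ Icc 1 N, g k := by
  have hr : m % N < N := Nat.mod_lt _ hN
  have hinv : ∀ a ∈ Icc 1 N, (if m % N < a then a - m % N else a + N - m % N) ∈ Icc 1 N := by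
    intro a ha
    simp only [mem_Icc] at ha ⊢
    split_ifs <;> omega
  refine sum_nbij' (cyclicShift N m) _ ?_ hinv ?_ ?_ (fun _ _ => rfl)
  · intro a ha
    rw [cyclicShift_eq m ha]
    simp only [mem_Icc] at ha ⊢
    split_ifs <;> omega
  · intro a ha
    rw [cyclicShift_eq m ha]
    simp only [mem_Icc] at ha
    split_ifs <;> omega
  · intro a ha
    rw [cyclicShift_eq m (hinv a ha)]
    simp only [mem_Icc] at ha
    split_ifs <;> omega

lemma sum_sum_comp_cyclicShift {M : Type*} [AddCommMonoid M] {N : ℕ} (hN : 0 < N) (m : ℕ)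
    (G : ℕ → ℕ → M) :
    ∑ j ∈ Icc 1 N, ∑ k ∈ Icc 1 N, G (cyclicShift N m j) (cyclicShift N m k)
      = ∑ j ∈ Icc 1 N, ∑ k ∈ Icc 1 N, G j k := by
  simp only [sum_comp_cyclicShift hN m (G _)]
  exact sum_comp_cyclicShift hN m fun j => ∑ k ∈ Icc 1 N, G j k

lemma sum_lt_comp_cyclicShift {N : ℕ} (hN : 0 < N) (m : ℕ) (f : ℕ → ℕ → ℝ)
    (hanti : ∀ j k, f k j = -f j k) (hrow : ∀ j, ∑ k ∈ Icc 1 N, f j k = 0) :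
    ∑ j ∈ Icc 1 N, ∑ k ∈ Icc (j + 1) N, f (cyclicShift N m j) (cyclicShift N m k)
      = ∑ j ∈ Icc 1 N, ∑ k ∈ Icc (j + 1) N, f j k := by
  have hcol : ∀ k, ∑ j ∈ Icc 1 N, f j k = 0 := fun k => by
    simp only [← neg_eq_zero (a := ∑ j ∈ Icc 1 N, f j k), ← sum_neg_distrib, ← hanti, hrow]
  have hwrap : ∀ j ∈ Icc 1 N, ∀ k ∈ Icc 1 N,
      ((if j < k then f (cyclicShift N m j) (cyclicShift N m k) else 0)
        - if cyclicShift N m j < cyclicShift N m k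
          then f (cyclicShift N m j) (cyclicShift N m k) else 0)
        = ((if N < k + m % N then 1 else 0) - if N < j + m % N then 1 else 0)
          * f (cyclicShift N m j) (cyclicShift N m k) := by
    intro j hj k hk
    rw [cyclicShift_eq m hj, cyclicShift_eq m hk]
    simp only [mem_Icc] at hj hk
    split_ifs <;> first | omega | ring
  rw [sum_sum_Icc_succ_eq_sum_ite, sum_sum_Icc_succ_eq_sum_ite]
  conv_rhs => rw [← sum_sum_comp_cyclicShift hN m]
  rw [← sub_eq_zero, ← sum_sub_distrib]
  simp only [← sum_sub_distrib]
  rw [sum_congr rfl fun j hj => sum_congr rfl (hwrap j hj)]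
  refine sum_sum_sub_mul_eq_zero _ _ _ (fun j => ?_) (fun k => ?_)
  · exact (sum_comp_cyclicShift hN m _).trans (hrow _)
  · exact (sum_comp_cyclicShift hN m fun j => f j _).trans (hcol _)

-- Shoelace formula for the signed area of the polygon with edge vectors `μ k • exp (ψ k * I)`.
noncomputable def signedArea (N : ℕ) (ψ μ : ℕ → ℝ) : ℝ :=
  -(1 / 2) * ∑ j ∈ Icc 1 N, ∑ k ∈ Icc (j + 1) N, μ j * μ k * sin (ψ j - ψ k)

-- `Qform` for arbitrary angles `ψ`, with `sin θ_N` read as `sin (ψ N - ψ (N - 1))`.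
noncomputable def areaQuadForm (N : ℕ) (ψ μ : ℕ → ℝ) : ℝ :=
  -(1 / 2) * ∑ j ∈ Icc 1 (N - 2),
      sin (ψ N - ψ j) * sin (ψ (N - 1) - ψ j) / sin (ψ N - ψ (N - 1)) * (μ j) ^ 2
  - ∑ j ∈ Icc 1 (N - 2), ∑ k ∈ Icc (j + 1) (N - 2),
      sin (ψ N - ψ j) * sin (ψ (N - 1) - ψ k) / sin (ψ N - ψ (N - 1)) * (μ j * μ k)

section Polygon

variable {N : ℕ} {ψ μ : ℕ → ℝ}

lemma sin_sub_mul_sum_lt_of_closed (hN : 2 ≤ N)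
    (hclosed : ∑ k ∈ Icc 1 N, μ k * sin (ψ N - ψ k) = 0) :
    sin (ψ N - ψ (N - 1)) * ∑ j ∈ Icc 1 N, ∑ k ∈ Icc (j + 1) N, μ j * μ k * sin (ψ j - ψ k)
      = ∑ j ∈ Icc 1 (N - 2), (μ j * sin (ψ N - ψ j)) * (μ j * sin (ψ (N - 1) - ψ j))
        + 2 * ∑ j ∈ Icc 1 (N - 2), ∑ k ∈ Icc (j + 1) (N - 2),
            (μ j * sin (ψ N - ψ j)) * (μ k * sin (ψ (N - 1) - ψ k)) := by
  set D := sin (ψ N - ψ (N - 1))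
  set a : ℕ → ℝ := fun j => μ j * sin (ψ N - ψ j)
  set b : ℕ → ℝ := fun j => μ j * sin (ψ (N - 1) - ψ j)
  have ha : μ (N - 1) * D = -∑ j ∈ Icc 1 (N - 2), a j := by
    rw [sum_Icc_eq_add_top_two hN (by omega), sub_self, sin_zero, mul_zero, add_zero] at hclosed
    linear_combination hclosed
  have hplucker : D * ∑ j ∈ Icc 1 (N - 2), ∑ k ∈ Icc (j + 1) (N - 2), μ j * μ k * sin (ψ j - ψ k)
      = ∑ j ∈ Icc 1 (N - 2), ∑ k ∈ Icc (j + 1) (N - 2), (a j * b k - a k * b j) := by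
    simp only [mul_sum]
    refine sum_congr rfl fun j _ => sum_congr rfl fun k _ => ?_
    linear_combination (-(μ j * μ k)) *
      sin_sub_mul_sin_sub_sub_sin_sub_mul_sin_sub (ψ N) (ψ (N - 1)) (ψ j) (ψ k)
  have hcross : ∑ j ∈ Icc 1 (N - 2), (μ j * μ (N - 1) * sin (ψ j - ψ (N - 1))
      + μ j * μ N * sin (ψ j - ψ N)) = -(μ (N - 1) * ∑ j ∈ Icc 1 (N - 2), b j)
        - μ N * ∑ j ∈ Icc 1 (N - 2), a j := by
    simp only [mul_sum, ← sum_neg_distrib, ← sum_sub_distrib]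
    refine sum_congr rfl fun j _ => ?_
    rw [← neg_sub (ψ (N - 1)), ← neg_sub (ψ N), sin_neg, sin_neg]
    ring
  have hsum : ∑ j ∈ Icc 1 (N - 2), ∑ k ∈ Icc (j + 1) (N - 2), (a j * b k - a k * b j)
      + ∑ j ∈ Icc 1 (N - 2), ∑ k ∈ Icc (j + 1) (N - 2), (a j * b k + a k * b j)
      = 2 * ∑ j ∈ Icc 1 (N - 2), ∑ k ∈ Icc (j + 1) (N - 2), a j * b k := by
    simp only [← sum_add_distrib, mul_sum]
    exact sum_congr rfl fun j _ => sum_congr rfl fun k _ => by ring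
  rw [sum_sum_Icc_succ_eq_add_top_two hN, hcross, ← neg_sub (ψ N), sin_neg, mul_add, mul_add,
    hplucker]
  -- `μ N` drops out: its terms add up to `-μ N * (A + μ (N - 1) * D)`, which is `0` by `ha`.
  linear_combination sum_mul_sum_Icc_eq_diag_add_lt (N - 2) a b + hsum
    - (∑ j ∈ Icc 1 (N - 2), b j + μ N * D) * ha

lemma areaQuadForm_eq_signedArea (hN : 2 ≤ N)
    (hclosed : ∑ k ∈ Icc 1 N, μ k * sin (ψ N - ψ k) = 0) (hD : sin (ψ N - ψ (N - 1)) ≠ 0) :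
    areaQuadForm N ψ μ = signedArea N ψ μ := by
  rw [areaQuadForm, signedArea, ← mul_div_cancel_left₀ (∑ j ∈ Icc 1 N, _) hD,
    sin_sub_mul_sum_lt_of_closed hN hclosed, add_div, mul_div_assoc, sum_div, sum_div]
  simp only [sum_div]
  rw [mul_add, ← mul_assoc, show -(1 / 2) * 2 = (-1 : ℝ) by norm_num, neg_one_mul,
    ← sub_eq_add_neg]
  exact congr_arg₂ (· - ·) (congr_arg _ (sum_congr rfl fun j _ => by ring))
    (sum_congr rfl fun j _ => sum_congr rfl fun k _ => by ring)

lemma signedArea_comp_cyclicShift (hN : 0 < N) (m : ℕ)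
    (hclosed : ∀ t, ∑ k ∈ Icc 1 N, μ k * sin (t - ψ k) = 0) :
    signedArea N (fun k => ψ (cyclicShift N m k)) (fun k => μ (cyclicShift N m k))
      = signedArea N ψ μ := by
  rw [signedArea, signedArea,
    sum_lt_comp_cyclicShift hN m fun j k => μ j * μ k * sin (ψ j - ψ k)]
  · intro j k
    rw [← neg_sub, sin_neg]
    ring
  · intro j
    simp only [mul_assoc, ← mul_sum, hclosed, mul_zero]

end Polygon

lemma phiAng_succ_sub (θ : ℕ → ℝ) (n : ℕ) : phiAng θ (n + 1) - phiAng θ n = θ (n + 1) := by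
  rw [phiAng, phiAng, sum_Icc_succ_top (by omega)]
  ring

theorem stmt1_general (N : ℕ) (hN : 3 ≤ N) (θ lam : ℕ → ℝ)
    (hsinN : Real.sin (θ N) ≠ 0)
    (hclose : ∑ k ∈ Finset.Icc 1 N,
        (lam k : ℂ) * Complex.exp (-(phiAng θ k : ℂ) * Complex.I) = 0)
    (σ : ℕ → ℕ) (hσ : ∃ m : ℕ, ∀ j, σ j = (j + m - 1) % N + 1)
    (hσsin : Real.sin (phiAng θ (σ N) - phiAng θ (σ (N-1))) ≠ 0) :
    -(1/2) * ∑ j ∈ Finset.Icc 1 (N-2),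
        Real.sin (phiAng θ (σ N) - phiAng θ (σ j))
          * Real.sin (phiAng θ (σ (N-1)) - phiAng θ (σ j))
          / Real.sin (phiAng θ (σ N) - phiAng θ (σ (N-1))) * (lam (σ j))^2
      - ∑ j ∈ Finset.Icc 1 (N-2), ∑ k ∈ Finset.Icc (j+1) (N-2),
          Real.sin (phiAng θ (σ N) - phiAng θ (σ j))
            * Real.sin (phiAng θ (σ (N-1)) - phiAng θ (σ k))
            / Real.sin (phiAng θ (σ N) - phiAng θ (σ (N-1))) * (lam (σ j) * lam (σ k))
      = Qform N θ lam := by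
  obtain ⟨m, hm⟩ := hσ
  obtain rfl : σ = cyclicShift N m := funext hm
  have hclosed := sum_mul_sin_sub_eq_zero_of_sum_mul_exp_eq_zero _ _ _ hclose
  have hθ : θ N = phiAng θ N - phiAng θ (N - 1) := by
    obtain ⟨n, rfl⟩ : ∃ n, N = n + 1 := ⟨N - 1, by omega⟩
    exact (phiAng_succ_sub θ n).symm
  rw [hθ] at hsinN
  calc _ = signedArea N (fun k => phiAng θ (cyclicShift N m k))
          (fun k => lam (cyclicShift N m k)) :=
        areaQuadForm_eq_signedArea (by omega)
          ((sum_comp_cyclicShift (by omega) m _).trans (hclosed _)) hσsin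
    _ = signedArea N (phiAng θ) lam := signedArea_comp_cyclicShift (by omega) m hclosed
    _ = Qform N θ lam := by
      rw [← areaQuadForm_eq_signedArea (by omega) (hclosed _) hsinN, Qform, hθ]
      rfl

/-- Invariance of the signed-area formula under cyclic relabelling of the vertices. -/
theorem stmt1 (N : ℕ) (hN : 3 ≤ N) (θ lam : ℕ → ℝ)
    (hsum : ∑ k ∈ Finset.Icc 1 N, θ k = 2 * Real.pi)
    (hsinN : Real.sin (θ N) ≠ 0)
    (hclose : ∑ k ∈ Finset.Icc 1 N,
        (lam k : ℂ) * Complex.exp (-(phiAng θ k : ℂ) * Complex.I) = 0)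
    (σ : ℕ → ℕ) (hσ : ∃ m : ℕ, ∀ j, σ j = (j + m - 1) % N + 1)
    (hσsin : Real.sin (phiAng θ (σ N) - phiAng θ (σ (N-1))) ≠ 0) :
    -(1/2) * ∑ j ∈ Finset.Icc 1 (N-2),
        Real.sin (phiAng θ (σ N) - phiAng θ (σ j))
          * Real.sin (phiAng θ (σ (N-1)) - phiAng θ (σ j))
          / Real.sin (phiAng θ (σ N) - phiAng θ (σ (N-1))) * (lam (σ j))^2
      - ∑ j ∈ Finset.Icc 1 (N-2), ∑ k ∈ Finset.Icc (j+1) (N-2),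
          Real.sin (phiAng θ (σ N) - phiAng θ (σ j))
            * Real.sin (phiAng θ (σ (N-1)) - phiAng θ (σ k))
            / Real.sin (phiAng θ (σ N) - phiAng θ (σ (N-1))) * (lam (σ j) * lam (σ k))
      = Qform N θ lam :=
  stmt1_general N hN θ lam hsinN hclose σ hσ hσsin
end

section
/- Assume the positivity condition: N ≥ 3 and θ_k ∈ (0,π) for all 1 ≤ k ≤ N with ∑_{k=1}^N θ_k = 2π. Let λ ∈ ℝ^{N−2} and set λ_{N−1} := vᵀλ, λ_N := wᵀλ. If λ_k > 0 for all 1 ≤ k ≤ N, or λ_k < 0 for all 1 ≤ k ≤ N, then Q(λ) > 0. -/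
/-!
The numbers `λ_1, …, λ_N` are the side lengths of a polygon whose `k`-th edge points in direction
`φ_k`: the vectors `v, w` are exactly the coefficients making the edges `λ_k e^{iφ_k}` sum to
zero (a three-term sine identity), and `2Q(λ)` is the signed area `∑_{j<k} λ_j λ_k sin(φ_k - φ_j)`
of that polygon. Since the exterior angles `θ_k` lie in `(0, π)` and add up to `2π`, the polygon is
convex. Triangulating it as a fan from its first vertex, every triangle has nonnegative area
(computed either from the edges before it or, by closure, from the edges after it, whichever turn
by at most `π`), and the first one, `λ_1 λ_2 sin θ_2`, has positive area. The case of negative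
`λ` follows by `λ ↦ -λ`.
-/

open Finset Real

section IndexBookkeeping

variable {M : Type*} [AddCommMonoid M]

lemma sum_Icc_eq_sum_Ico_add_add_sum_Ioc (f : ℕ → M) {n j : ℕ} (hj : j ∈ Icc 1 n) :
    ∑ k ∈ Icc 1 n, f k = ∑ k ∈ Ico 1 j, f k + f j + ∑ k ∈ Ioc j n, f k := by
  rw [mem_Icc] at hj
  rw [sum_Ico_add_eq_sum_Icc hj.1]
  simpa only [← Icc_add_one_left_eq_Ioc, zero_add] using
    (sum_Ioc_consecutive f (Nat.zero_le j) hj.2).symm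

lemma sum_Icc_sum_Ioc_comm (f : ℕ → ℕ → M) (n : ℕ) :
    ∑ j ∈ Icc 1 n, ∑ k ∈ Ioc j n, f j k = ∑ k ∈ Icc 1 n, ∑ j ∈ Ico 1 k, f j k :=
  sum_comm' fun j k => by simp only [mem_Icc, mem_Ioc, mem_Ico]; omega

lemma sum_Icc_sum_Icc_eq_diag_add_sum_Ioc (f : ℕ → ℕ → M) (n : ℕ) :
    ∑ j ∈ Icc 1 n, ∑ k ∈ Icc 1 n, f j k
      = ∑ j ∈ Icc 1 n, f j j + ∑ j ∈ Icc 1 n, ∑ k ∈ Ioc j n, (f j k + f k j) := by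
  rw [sum_congr rfl fun j hj => sum_Icc_eq_sum_Ico_add_add_sum_Ioc (f j) hj]
  simp only [sum_add_distrib]
  rw [← sum_Icc_sum_Ioc_comm (fun j k => f k j)]
  abel

end IndexBookkeeping

section Polygon

/-- The polygon whose `k`-th edge is `μ k • (cos (φ k), sin (φ k))`, `1 ≤ k ≤ n`, closes up:
the edges sum to zero, as seen through their cross product with every unit vector. -/
def IsClosedPolygon (n : ℕ) (μ φ : ℕ → ℝ) : Prop :=
  ∀ α, ∑ k ∈ Icc 1 n, μ k * sin (α - φ k) = 0

/-- Twice the signed area of a closed polygon, as the sum of the cross products of its edges. -/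
noncomputable def twiceSignedArea (n : ℕ) (μ φ : ℕ → ℝ) : ℝ :=
  ∑ j ∈ Icc 1 n, ∑ k ∈ Ioc j n, μ j * μ k * sin (φ k - φ j)

variable {n : ℕ} {μ φ : ℕ → ℝ}

lemma IsClosedPolygon.neg (h : IsClosedPolygon n μ φ) : IsClosedPolygon n (-μ) φ := fun α => by
  simpa only [Pi.neg_apply, neg_mul, sum_neg_distrib, neg_eq_zero] using h α

lemma twiceSignedArea_neg : twiceSignedArea n (-μ) φ = twiceSignedArea n μ φ := by
  simp only [twiceSignedArea, Pi.neg_apply, neg_mul_neg]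

/-- Fan triangulation from the first vertex: the `m`-th summand is twice the area of the
triangle spanned by the first vertex and the `m`-th edge. -/
lemma twiceSignedArea_eq_sum_fan (n : ℕ) (μ φ : ℕ → ℝ) :
    twiceSignedArea n μ φ = ∑ m ∈ Icc 1 n, μ m * ∑ k ∈ Ico 1 m, μ k * sin (φ m - φ k) := by
  rw [twiceSignedArea, sum_Icc_sum_Ioc_comm]
  refine sum_congr rfl fun m _ => ?_
  rw [mul_sum]
  exact sum_congr rfl fun k _ => by ring

lemma IsClosedPolygon.sum_Ico_eq_sum_Ioc (h : IsClosedPolygon n μ φ) {m : ℕ} (hm : m ∈ Icc 1 n) :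
    ∑ k ∈ Ico 1 m, μ k * sin (φ m - φ k) = ∑ k ∈ Ioc m n, μ k * sin (φ k - φ m) := by
  have hsplit := h (φ m)
  rw [sum_Icc_eq_sum_Ico_add_add_sum_Ioc _ hm, sub_self, sin_zero, mul_zero, add_zero] at hsplit
  have hanti : ∑ k ∈ Ioc m n, μ k * sin (φ m - φ k) = -∑ k ∈ Ioc m n, μ k * sin (φ k - φ m) := by
    rw [← sum_neg_distrib]
    exact sum_congr rfl fun k _ => by rw [← neg_sub, sin_neg, mul_neg]
  linarith

/-- Convexity: once the direction of the `m`-th edge has turned by more than `π` from that of an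
earlier edge, all later edges turn by less than `π` from it, so the closing relation makes the
fan triangle nonnegative from the other side. -/
lemma IsClosedPolygon.fan_nonneg (h : IsClosedPolygon n μ φ) (hμ : ∀ k ∈ Icc 1 n, 0 ≤ μ k)
    (hφ : MonotoneOn φ (Icc 1 n)) (hspan : φ n ≤ φ 1 + 2 * π) {m : ℕ} (hm : m ∈ Icc 1 n) :
    0 ≤ ∑ k ∈ Ico 1 m, μ k * sin (φ m - φ k) := by
  have hmono : ∀ {j k}, 1 ≤ j → j ≤ k → k ≤ n → φ j ≤ φ k := fun h1 hjk hk =>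
    hφ (mem_Icc.2 ⟨h1, hjk.trans hk⟩) (mem_Icc.2 ⟨h1.trans hjk, hk⟩) hjk
  rw [mem_Icc] at hm
  by_cases hfar : ∃ k ∈ Ico 1 m, π < φ m - φ k
  · obtain ⟨k₀, hk₀, hπ⟩ := hfar
    rw [mem_Ico] at hk₀
    rw [h.sum_Ico_eq_sum_Ioc (mem_Icc.2 hm)]
    refine sum_nonneg fun k hk => ?_
    rw [mem_Ioc] at hk
    have h1k₀ := hmono le_rfl hk₀.1 (by omega)
    have hkn := hmono (by omega) hk.2 le_rfl
    exact mul_nonneg (hμ k (mem_Icc.2 ⟨by omega, hk.2⟩)) <|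
      sin_nonneg_of_nonneg_of_le_pi (sub_nonneg.2 (hmono hm.1 hk.1.le hk.2)) (by linarith)
  · push Not at hfar
    refine sum_nonneg fun k hk => ?_
    rw [mem_Ico] at hk
    exact mul_nonneg (hμ k (mem_Icc.2 ⟨hk.1, by omega⟩)) <|
      sin_nonneg_of_nonneg_of_le_pi (sub_nonneg.2 (hmono hk.1 hk.2.le hm.2)) (hfar k (mem_Ico.2 hk))

lemma IsClosedPolygon.twiceSignedArea_pos_of_pos (h : IsClosedPolygon n μ φ) (hn : 2 ≤ n)
    (hμ : ∀ k ∈ Icc 1 n, 0 < μ k) (hφ : MonotoneOn φ (Icc 1 n)) (hspan : φ n ≤ φ 1 + 2 * π)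
    (hturn : 0 < sin (φ 2 - φ 1)) : 0 < twiceSignedArea n μ φ := by
  rw [twiceSignedArea_eq_sum_fan]
  have hmem : ∀ k, 1 ≤ k → k ≤ n → k ∈ Icc 1 n := fun k h1 h2 => mem_Icc.2 ⟨h1, h2⟩
  refine sum_pos' (fun m hm => mul_nonneg (hμ m hm).le
    (h.fan_nonneg (fun k hk => (hμ k hk).le) hφ hspan hm)) ⟨2, hmem 2 (by norm_num) hn, ?_⟩
  rw [show Ico 1 2 = {1} from rfl, sum_singleton]
  exact mul_pos (hμ 2 (hmem 2 (by norm_num) hn)) (mul_pos (hμ 1 (hmem 1 le_rfl (by omega))) hturn)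

lemma IsClosedPolygon.twiceSignedArea_pos (h : IsClosedPolygon n μ φ) (hn : 2 ≤ n)
    (hμ : (∀ k ∈ Icc 1 n, 0 < μ k) ∨ ∀ k ∈ Icc 1 n, μ k < 0) (hφ : MonotoneOn φ (Icc 1 n))
    (hspan : φ n ≤ φ 1 + 2 * π) (hturn : 0 < sin (φ 2 - φ 1)) : 0 < twiceSignedArea n μ φ := by
  rcases hμ with hpos | hneg
  · exact h.twiceSignedArea_pos_of_pos hn hpos hφ hspan hturn
  · rw [← twiceSignedArea_neg]
    exact h.neg.twiceSignedArea_pos_of_pos hn (fun k hk => neg_pos.2 (hneg k hk)) hφ hspan hturn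

end Polygon

section lamExt

variable {θ lam : ℕ → ℝ} {n : ℕ}

lemma phiAng_succ (θ : ℕ → ℝ) (k : ℕ) : phiAng θ (k + 1) = phiAng θ k + θ (k + 1) :=
  sum_Icc_succ_top (by omega) θ

lemma phiAng_one (θ : ℕ → ℝ) : phiAng θ 1 = θ 1 := by
  simp [phiAng]

lemma monotoneOn_phiAng {N : ℕ} (hθ : ∀ k ∈ Icc 1 N, 0 ≤ θ k) :
    MonotoneOn (phiAng θ) (Icc 1 N) := fun _ _ _ hk hjk =>
  sum_le_sum_of_subset_of_nonneg (Icc_subset_Icc_right hjk) fun a ha _ =>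
    hθ a (Icc_subset_Icc_right (mem_Icc.1 hk).2 ha)

lemma lamExt_of_le {k : ℕ} (hk : k ≤ n) : lamExt (n + 2) θ lam k = lam k := by
  rw [lamExt, if_neg (by omega), if_neg (by omega)]

lemma lamExt_add_one :
    lamExt (n + 2) θ lam (n + 1) = ∑ j ∈ Icc 1 n, vvec (n + 2) θ j * lam j := by
  rw [lamExt, if_pos (by omega)]
  rfl

lemma lamExt_add_two :
    lamExt (n + 2) θ lam (n + 2) = ∑ j ∈ Icc 1 n, wvec (n + 2) θ j * lam j := by
  rw [lamExt, if_neg (by omega), if_pos rfl]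
  rfl

lemma theta_eq_phiAng_sub (θ : ℕ → ℝ) (n : ℕ) :
    θ (n + 2) = phiAng θ (n + 2) - phiAng θ (n + 1) := by
  rw [phiAng_succ θ (n + 1)]
  ring

lemma sin_add_vvec_mul_add_wvec_mul (hs : sin (θ (n + 2)) ≠ 0) (α : ℝ) (j : ℕ) :
    sin (α - phiAng θ j) + vvec (n + 2) θ j * sin (α - phiAng θ (n + 1))
      + wvec (n + 2) θ j * sin (α - phiAng θ (n + 2)) = 0 := by
  rw [vvec, wvec, show n + 2 - 1 = n + 1 from rfl]
  rw [theta_eq_phiAng_sub θ n] at hs ⊢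
  field_simp
  simp only [sin_sub]
  ring

lemma isClosedPolygon_lamExt (hs : sin (θ (n + 2)) ≠ 0) :
    IsClosedPolygon (n + 2) (lamExt (n + 2) θ lam) (phiAng θ) := by
  intro α
  rw [sum_Icc_succ_top (by omega), sum_Icc_succ_top (by omega), lamExt_add_one, lamExt_add_two,
    sum_congr rfl fun k hk => by rw [lamExt_of_le (mem_Icc.1 hk).2], sum_mul, sum_mul,
    ← sum_add_distrib, ← sum_add_distrib]
  refine sum_eq_zero fun j _ => ?_
  linear_combination lam j * sin_add_vvec_mul_add_wvec_mul hs α j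

lemma sin_phiAng_sub (hs : sin (θ (n + 2)) ≠ 0) (j k : ℕ) :
    sin (phiAng θ k - phiAng θ j) = sin (θ (n + 2)) *
      (vvec (n + 2) θ j * wvec (n + 2) θ k - vvec (n + 2) θ k * wvec (n + 2) θ j) := by
  rw [vvec, vvec, wvec, wvec, show n + 2 - 1 = n + 1 from rfl]
  rw [theta_eq_phiAng_sub θ n] at hs ⊢
  field_simp
  simp only [sin_sub]
  ring

lemma sin_phiAng_add_two_sub (hs : sin (θ (n + 2)) ≠ 0) (j : ℕ) :
    sin (phiAng θ (n + 2) - phiAng θ j) = -(sin (θ (n + 2)) * vvec (n + 2) θ j) := by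
  rw [vvec]
  field_simp

lemma sin_phiAng_add_one_sub (hs : sin (θ (n + 2)) ≠ 0) (j : ℕ) :
    sin (phiAng θ (n + 1) - phiAng θ j) = sin (θ (n + 2)) * wvec (n + 2) θ j := by
  rw [wvec, show n + 2 - 1 = n + 1 from rfl]
  field_simp

lemma two_mul_Qform (hs : sin (θ (n + 2)) ≠ 0) :
    2 * Qform (n + 2) θ lam = sin (θ (n + 2)) *
      (∑ j ∈ Icc 1 n, vvec (n + 2) θ j * lam j * (wvec (n + 2) θ j * lam j)
        + 2 * ∑ j ∈ Icc 1 n, ∑ k ∈ Ioc j n,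
          vvec (n + 2) θ j * lam j * (wvec (n + 2) θ k * lam k)) := by
  simp only [Qform, show n + 2 - 2 = n from rfl, show n + 2 - 1 = n + 1 from rfl,
    Icc_add_one_left_eq_Ioc, sin_phiAng_add_two_sub hs, sin_phiAng_add_one_sub hs]
  have hdiag : ∑ j ∈ Icc 1 n, -(sin (θ (n + 2)) * vvec (n + 2) θ j) *
        (sin (θ (n + 2)) * wvec (n + 2) θ j) / sin (θ (n + 2)) * lam j ^ 2
      = -(sin (θ (n + 2)) *
        ∑ j ∈ Icc 1 n, vvec (n + 2) θ j * lam j * (wvec (n + 2) θ j * lam j)) := by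
    rw [mul_sum, ← sum_neg_distrib]
    exact sum_congr rfl fun j _ => by field_simp
  have hoff : ∑ j ∈ Icc 1 n, ∑ k ∈ Ioc j n, -(sin (θ (n + 2)) * vvec (n + 2) θ j) *
        (sin (θ (n + 2)) * wvec (n + 2) θ k) / sin (θ (n + 2)) * (lam j * lam k)
      = -(sin (θ (n + 2)) * ∑ j ∈ Icc 1 n, ∑ k ∈ Ioc j n,
        vvec (n + 2) θ j * lam j * (wvec (n + 2) θ k * lam k)) := by
    simp only [mul_sum, ← sum_neg_distrib]
    exact sum_congr rfl fun j _ => sum_congr rfl fun k _ => by field_simp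
  rw [hdiag, hoff]
  ring

lemma twiceSignedArea_lamExt (hs : sin (θ (n + 2)) ≠ 0) :
    twiceSignedArea (n + 2) (lamExt (n + 2) θ lam) (phiAng θ) = sin (θ (n + 2)) *
      (∑ j ∈ Icc 1 n, ∑ k ∈ Ioc j n, (vvec (n + 2) θ j * lam j * (wvec (n + 2) θ k * lam k)
          - vvec (n + 2) θ k * lam k * (wvec (n + 2) θ j * lam j))
        + (∑ j ∈ Icc 1 n, vvec (n + 2) θ j * lam j) * ∑ j ∈ Icc 1 n, wvec (n + 2) θ j * lam j) := by
  rw [twiceSignedArea, sum_Icc_succ_top (by omega), sum_Icc_succ_top (by omega),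
    Nat.Ioc_succ_singleton, Ioc_self, sum_empty, add_zero, sum_singleton,
    ← theta_eq_phiAng_sub]
  set V := ∑ j ∈ Icc 1 n, vvec (n + 2) θ j * lam j
  set W := ∑ j ∈ Icc 1 n, wvec (n + 2) θ j * lam j
  have hV : lamExt (n + 2) θ lam (n + 1) = V := lamExt_add_one
  have hW : lamExt (n + 2) θ lam (n + 2) = W := lamExt_add_two
  have hrow : ∀ j ∈ Icc 1 n, ∑ k ∈ Ioc j (n + 2),
      lamExt (n + 2) θ lam j * lamExt (n + 2) θ lam k * sin (phiAng θ k - phiAng θ j)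
      = sin (θ (n + 2)) * ∑ k ∈ Ioc j n, (vvec (n + 2) θ j * lam j * (wvec (n + 2) θ k * lam k)
          - vvec (n + 2) θ k * lam k * (wvec (n + 2) θ j * lam j))
        + sin (θ (n + 2)) * (V * (wvec (n + 2) θ j * lam j) - W * (vvec (n + 2) θ j * lam j)) := by
    intro j hj
    rw [mem_Icc] at hj
    have hinner : ∑ k ∈ Ioc j n,
        lamExt (n + 2) θ lam j * lamExt (n + 2) θ lam k * sin (phiAng θ k - phiAng θ j)
        = sin (θ (n + 2)) * ∑ k ∈ Ioc j n, (vvec (n + 2) θ j * lam j * (wvec (n + 2) θ k * lam k)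
          - vvec (n + 2) θ k * lam k * (wvec (n + 2) θ j * lam j)) := by
      rw [mul_sum]
      refine sum_congr rfl fun k hk => ?_
      rw [lamExt_of_le hj.2, lamExt_of_le (mem_Ioc.1 hk).2, sin_phiAng_sub hs]
      ring
    rw [sum_Ioc_succ_top (by omega), sum_Ioc_succ_top hj.2, hinner, hV, hW, lamExt_of_le hj.2,
      sin_phiAng_add_one_sub hs, sin_phiAng_add_two_sub hs]
    ring
  have hcancel : ∑ j ∈ Icc 1 n,
      (V * (wvec (n + 2) θ j * lam j) - W * (vvec (n + 2) θ j * lam j)) = 0 := by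
    rw [sum_sub_distrib, ← mul_sum, ← mul_sum]
    ring
  rw [sum_congr rfl hrow, sum_add_distrib, ← mul_sum, ← mul_sum, hcancel, hV, hW]
  ring

lemma twiceSignedArea_lamExt_eq_two_mul_Qform (hs : sin (θ (n + 2)) ≠ 0) :
    twiceSignedArea (n + 2) (lamExt (n + 2) θ lam) (phiAng θ) = 2 * Qform (n + 2) θ lam := by
  rw [twiceSignedArea_lamExt hs, two_mul_Qform hs, sum_mul_sum,
    sum_Icc_sum_Icc_eq_diag_add_sum_Ioc]
  have hoff : ∀ x y : ℕ → ℕ → ℝ, ∑ j ∈ Icc 1 n, ∑ k ∈ Ioc j n, (x j k - y j k)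
      + ∑ j ∈ Icc 1 n, ∑ k ∈ Ioc j n, (x j k + y j k)
      = 2 * ∑ j ∈ Icc 1 n, ∑ k ∈ Ioc j n, x j k := by
    intro x y
    simp only [← sum_add_distrib, mul_sum]
    exact sum_congr rfl fun j _ => sum_congr rfl fun k _ => by ring
  linear_combination sin (θ (n + 2)) * hoff
    (fun j k => vvec (n + 2) θ j * lam j * (wvec (n + 2) θ k * lam k))
    (fun j k => vvec (n + 2) θ k * lam k * (wvec (n + 2) θ j * lam j))

end lamExt

/-- Under the positivity condition, if all (extended) side lengths are positive, or all are
negative, then the signed area is positive. -/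
theorem stmt2 (N : ℕ) (hN : 3 ≤ N) (θ lam : ℕ → ℝ)
    (hθ : ∀ k, 1 ≤ k → k ≤ N → θ k ∈ Set.Ioo 0 Real.pi)
    (hsum : ∑ k ∈ Finset.Icc 1 N, θ k = 2 * Real.pi)
    (hlam : (∀ k, 1 ≤ k → k ≤ N → 0 < lamExt N θ lam k) ∨
            (∀ k, 1 ≤ k → k ≤ N → lamExt N θ lam k < 0)) :
    0 < Qform N θ lam := by
  obtain ⟨n, rfl⟩ : ∃ n, N = n + 2 := ⟨N - 2, by omega⟩
  have hθ' : ∀ k ∈ Icc 1 (n + 2), θ k ∈ Set.Ioo 0 π := fun k hk =>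
    hθ k (mem_Icc.1 hk).1 (mem_Icc.1 hk).2
  have hsin : ∀ k ∈ Icc 1 (n + 2), 0 < sin (θ k) := fun k hk =>
    sin_pos_of_pos_of_lt_pi (hθ' k hk).1 (hθ' k hk).2
  have hspan : phiAng θ (n + 2) ≤ phiAng θ 1 + 2 * π := by
    rw [phiAng_one]
    exact hsum.le.trans (le_add_of_nonneg_left (hθ 1 le_rfl (by omega)).1.le)
  have hturn : 0 < sin (phiAng θ 2 - phiAng θ 1) := by
    rw [phiAng_succ θ 1, add_sub_cancel_left]
    exact hsin 2 (mem_Icc.2 ⟨by omega, by omega⟩)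
  have hs := (hsin (n + 2) (mem_Icc.2 ⟨by omega, le_rfl⟩)).ne'
  have harea := (isClosedPolygon_lamExt hs).twiceSignedArea_pos (by omega)
    (hlam.imp (fun h k hk => h k (mem_Icc.1 hk).1 (mem_Icc.1 hk).2)
      (fun h k hk => h k (mem_Icc.1 hk).1 (mem_Icc.1 hk).2))
    (monotoneOn_phiAng fun k hk => (hθ' k hk).1.le) hspan hturn
  rw [twiceSignedArea_lamExt_eq_two_mul_Qform hs] at harea
  linarith
end

section
/- Assume N ≥ 4 and the positivity condition θ_k ∈ (0,π) for all 1 ≤ k ≤ N with ∑_{k=1}^N θ_k = 2π. Then the signed-area quadratic form Q on ℝ^{N−2} has signature (1, N−3): there is a basis of ℝ^{N−2} in which Q(x) = x_1² − x_2² − … − x_{N−2}². Equivalently, the symmetric matrix A is invertible with exactly one positive and N−3 negative eigenvalues. -/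
/-!
With `a_j = sin φ_j` and `b_j = sin (φ_{N-1} - φ_j)`, `2 sin θ_N · Q` is the quadratic form of the
Green matrix `(a_{min j k} b_{max j k})`. Summation by parts against `u_m = a_m / b_m` turns it into
`∑_m (u_m - u_{m-1}) ρ_m²` in the tail sums `ρ_m = ∑_{j ≥ m} b_j λ_j`, which form a triangular
system of coordinates. The Wronskian `a_m b_{m-1} - a_{m-1} b_m = -sin θ_N sin θ_m` is negative, so
`u_m - u_{m-1}` is positive exactly where `b` changes sign. Since `φ_{N-1} - φ_m` decreases from
`2π - θ_N > π` to `θ_{N-1} < π`, `b` changes sign exactly once: one positive square and `N - 3`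
negative ones. If `b` vanishes at the sign change, the two squares there are replaced by a
hyperbolic pair.
-/

open Finset Real

noncomputable section GreenForm

variable (n : ℕ) (a b : ℕ → ℝ)

def tailSum (m : ℕ) : Module.Dual ℝ (ℕ → ℝ) := ∑ j ∈ Icc m n, b j • LinearMap.proj j

/-- The quadratic form `∑_{j,k} a_{min j k} b_{max j k} λ_j λ_k` of a Green matrix on indices
`1, …, n`, with the off-diagonal part collected into tail sums. -/
def greenForm (lam : ℕ → ℝ) : ℝ :=
  ∑ j ∈ Icc 1 n, a j * lam j * (b j * lam j + 2 * tailSum n b (j + 1) lam)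

def greenCoeff (m : ℕ) : ℝ := a m / b m - a (m - 1) / b (m - 1)

variable {n a b}

lemma tailSum_apply (m : ℕ) (lam : ℕ → ℝ) :
    tailSum n b m lam = ∑ j ∈ Icc m n, b j * lam j := by
  simp [tailSum]

lemma tailSum_eq_add {m : ℕ} (hm : m ≤ n) (lam : ℕ → ℝ) :
    tailSum n b m lam = b m * lam m + tailSum n b (m + 1) lam := by
  rw [tailSum_apply, tailSum_apply, ← add_sum_Ioc_eq_sum_Icc hm, Icc_add_one_left_eq_Ioc]

lemma tailSum_of_lt {m : ℕ} (hm : n < m) (lam : ℕ → ℝ) : tailSum n b m lam = 0 := by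
  simp [tailSum_apply, Icc_eq_empty_of_lt hm]

lemma eq_zero_of_tailSum_eq_zero {lam : ℕ → ℝ} (h : ∀ m ∈ Icc 1 n, tailSum n b m lam = 0)
    {j : ℕ} (hj : j ∈ Icc 1 n) (hb : b j ≠ 0) : lam j = 0 := by
  obtain ⟨hj1, hjn⟩ := mem_Icc.mp hj
  have hnext : tailSum n b (j + 1) lam = 0 := by
    by_cases hj' : j + 1 ≤ n
    · exact h _ (mem_Icc.mpr ⟨by omega, hj'⟩)
    · exact tailSum_of_lt (by omega) lam
  have := tailSum_eq_add (b := b) hjn lam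
  rw [h j hj, hnext, add_zero, eq_comm, mul_eq_zero] at this
  exact this.resolve_left hb

/-- Summation by parts against `u_m = a_m / b_m`.  Where `b_m = 0`, Lean's `a_m / 0 = 0`
and the cross term `2 a_m λ_m ρ_{m+1}` is what survives. -/
lemma greenForm_eq (ha : a 0 = 0) (lam : ℕ → ℝ) :
    greenForm n a b lam
      = ∑ m ∈ Icc 1 n, greenCoeff a b m * tailSum n b m lam ^ 2
        + ∑ m ∈ Icc 1 n, if b m = 0 then 2 * a m * lam m * tailSum n b (m + 1) lam else 0 := by
  set ρ := fun m => tailSum n b m lam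
  set g := fun m => a (m - 1) / b (m - 1) * ρ m ^ 2
  have hterm : ∀ m ∈ Icc 1 n, a m * lam m * (b m * lam m + 2 * ρ (m + 1))
      = greenCoeff a b m * ρ m ^ 2
        + (if b m = 0 then 2 * a m * lam m * ρ (m + 1) else 0) + (g m - g (m + 1)) := by
    intro m hm
    have hρ : ρ m = b m * lam m + ρ (m + 1) := tailSum_eq_add (mem_Icc.mp hm).2 lam
    simp only [g, greenCoeff, hρ, Nat.add_sub_cancel]
    split_ifs with hb
    · simp only [hb, div_zero]
      ring
    · field_simp
      ring
  have htele : ∑ m ∈ Icc 1 n, (g m - g (m + 1)) = 0 := by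
    rw [← Ico_add_one_right_eq_Icc, ← Finset.sum_Ico_add' (fun m => g m - g (m + 1)) 0 n 1,
      ← range_eq_Ico, sum_range_sub' (fun m => g (m + 1))]
    simp [g, ha, ρ, tailSum_of_lt (Nat.lt_succ_self n)]
  rw [greenForm, sum_congr rfl hterm, sum_add_distrib, sum_add_distrib, htele, add_zero]

end GreenForm

/-- `F` has signature `(1, n - 1)` in the coordinates `λ_1, …, λ_n`. -/
def HasLorentzSignature (n : ℕ) (F : (ℕ → ℝ) → ℝ) : Prop :=
  ∃ (y : ℕ → Module.Dual ℝ (ℕ → ℝ)) (p : ℕ), p ∈ Icc 1 n ∧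
    (∀ lam, (∀ m ∈ Icc 1 n, y m lam = 0) → ∀ j ∈ Icc 1 n, lam j = 0) ∧
    ∀ lam, F lam = y p lam ^ 2 - ∑ m ∈ (Icc 1 n).erase p, y m lam ^ 2

lemma HasLorentzSignature.const_mul {n : ℕ} {F : (ℕ → ℝ) → ℝ} (hF : HasLorentzSignature n F)
    {r : ℝ} (hr : 0 < r) : HasLorentzSignature n (fun lam => r * F lam) := by
  obtain ⟨y, p, hp, hinj, hF⟩ := hF
  have hsq : ∀ m lam, (√r • y m) lam ^ 2 = r * y m lam ^ 2 := fun m lam => by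
    rw [LinearMap.smul_apply, smul_eq_mul, mul_pow, sq_sqrt hr.le]
  refine ⟨fun m => √r • y m, p, hp, fun lam h => hinj lam fun m hm => ?_, fun lam => ?_⟩
  · simpa [(sqrt_pos.mpr hr).ne'] using h m hm
  · simp only [hsq, hF, ← mul_sum, mul_sub]

theorem exists_basis_repr_eq_succAbove {K V : Type*} [Field K] [AddCommGroup V] [Module K V]
    [FiniteDimensional K V] {k : ℕ} (ℓ : V →ₗ[K] Fin (k + 1) → K) (hℓ : Function.Injective ℓ)
    (hV : Module.finrank K V = k + 1) (p : Fin (k + 1)) :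
    ∃ b : Module.Basis (Fin 1 ⊕ Fin k) K V, ∀ x,
      b.repr x (Sum.inl 0) = ℓ x p ∧ ∀ i, b.repr x (Sum.inr i) = ℓ x (p.succAbove i) := by
  let e : Fin 1 ⊕ Fin k → Fin (k + 1) := Sum.elim (fun _ => p) p.succAbove
  have he : Function.Surjective e := fun j => by
    rcases eq_or_ne j p with rfl | h
    · exact ⟨.inl 0, rfl⟩
    · obtain ⟨i, hi⟩ := Fin.exists_succAbove_eq h
      exact ⟨.inr i, hi⟩
  let ℓ' := LinearMap.funLeft K K e ∘ₗ ℓ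
  have hinj : Function.Injective ℓ' := (LinearMap.funLeft_injective_of_surjective K K e he).comp hℓ
  have hdim : Module.finrank K V = Module.finrank K (Fin 1 ⊕ Fin k → K) := by
    simp [hV, add_comm]
  exact ⟨.ofEquivFun (ℓ'.linearEquivOfInjective hinj hdim), fun x => ⟨rfl, fun i => rfl⟩⟩

theorem HasLorentzSignature.exists_basis {n k : ℕ} {F : (ℕ → ℝ) → ℝ}
    (hF : HasLorentzSignature n F) (hnk : n = k + 1) :
    ∃ b : Module.Basis (Fin 1 ⊕ Fin k) ℝ (Fin n → ℝ), ∀ x : Fin n → ℝ,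
      F (fun j => if h : 1 ≤ j ∧ j ≤ n then x ⟨j - 1, by omega⟩ else 0)
        = b.repr x (Sum.inl 0) ^ 2 - ∑ i : Fin k, b.repr x (Sum.inr i) ^ 2 := by
  subst hnk
  obtain ⟨y, p, hp, hinj, hF⟩ := hF
  obtain ⟨hp1, hpk⟩ := mem_Icc.mp hp
  let E : (Fin (k + 1) → ℝ) →ₗ[ℝ] ℕ → ℝ := LinearMap.pi fun j =>
    if h : 1 ≤ j ∧ j ≤ k + 1 then LinearMap.proj ⟨j - 1, by omega⟩ else 0
  have hE : ∀ x, E x = fun j => if h : 1 ≤ j ∧ j ≤ k + 1 then x ⟨j - 1, by omega⟩ else 0 :=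
    fun x => funext fun j => by
      simp only [E, LinearMap.pi_apply]
      split_ifs <;> rfl
  let ℓ : (Fin (k + 1) → ℝ) →ₗ[ℝ] Fin (k + 1) → ℝ := LinearMap.pi fun j => y (j + 1) ∘ₗ E
  have hℓ : Function.Injective ℓ := by
    rw [← LinearMap.ker_eq_bot, LinearMap.ker_eq_bot']
    intro x hx
    have hEx := hinj (E x) fun m hm => by
      obtain ⟨hm1, hmk⟩ := mem_Icc.mp hm
      simpa [ℓ, Nat.sub_add_cancel hm1] using congr_fun hx ⟨m - 1, by omega⟩
    funext i
    simpa [hE, Nat.lt_succ_iff.mp i.isLt] using hEx (i + 1) (mem_Icc.mpr ⟨by omega, by omega⟩)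
  obtain ⟨b, hb⟩ := exists_basis_repr_eq_succAbove ℓ hℓ (by simp) ⟨p - 1, by omega⟩
  refine ⟨b, fun x => ?_⟩
  set G := fun m => y m (E x) ^ 2
  have hIcc : ∑ m ∈ Icc 1 (k + 1), G m = ∑ j : Fin (k + 1), G (j + 1) := by
    rw [Fin.sum_univ_eq_sum_range (fun j => G (j + 1)), range_eq_Ico, sum_Ico_add',
      Ico_add_one_right_eq_Icc, zero_add]
  have hrest := Fin.sum_univ_succAbove (fun j : Fin (k + 1) => G (j + 1)) ⟨p - 1, by omega⟩
  rw [← hIcc, ← add_sum_erase _ _ hp] at hrest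
  simp only [Nat.sub_add_cancel hp1] at hrest
  have hℓx : ∀ j, ℓ x j ^ 2 = G (j + 1) := fun j => rfl
  rw [← hE, hF, (hb x).1]
  simp only [(hb x).2, hℓx, Nat.sub_add_cancel hp1]
  exact congrArg (G p - ·) (add_left_cancel hrest)

section GreenSignature

variable {n : ℕ} {a b : ℕ → ℝ}

lemma greenCoeff_eq {m : ℕ} (hm : b m ≠ 0) (hm' : b (m - 1) ≠ 0) :
    greenCoeff a b m = (a m * b (m - 1) - a (m - 1) * b m) / (b m * b (m - 1)) := by
  rw [greenCoeff, div_sub_div _ _ hm hm', mul_comm (b m) (a (m - 1))]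

lemma greenCoeff_neg {m : ℕ} (hW : a m * b (m - 1) - a (m - 1) * b m < 0)
    (hb : 0 < b m * b (m - 1)) : greenCoeff a b m < 0 := by
  rw [greenCoeff_eq (left_ne_zero_of_mul hb.ne') (right_ne_zero_of_mul hb.ne')]
  exact div_neg_of_neg_of_pos hW hb

lemma greenCoeff_pos {m : ℕ} (hW : a m * b (m - 1) - a (m - 1) * b m < 0)
    (hb : b m * b (m - 1) < 0) : 0 < greenCoeff a b m := by
  rw [greenCoeff_eq (left_ne_zero_of_mul hb.ne) (right_ne_zero_of_mul hb.ne)]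
  exact div_pos_of_neg_of_neg hW hb

variable (ha : a 0 = 0) (hW : ∀ m ∈ Icc 1 n, a m * b (m - 1) - a (m - 1) * b m < 0)
  {p : ℕ} (hp : p ∈ Icc 1 n) (hneg : ∀ m < p, b m < 0) (hpos : ∀ m ∈ Ioc p n, 0 < b m)

include hneg hpos in
lemma apply_ne_zero_of_ne {m : ℕ} (hm : m ∈ Icc 1 n) (hmp : m ≠ p) : b m ≠ 0 := by
  rcases lt_or_gt_of_ne hmp with h | h
  · exact (hneg m h).ne
  · exact (hpos m (mem_Ioc.mpr ⟨h, (mem_Icc.mp hm).2⟩)).ne'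

include hW hneg hpos in
lemma greenCoeff_neg_of_ne {m : ℕ} (hm : m ∈ Icc 1 n) (hmp : m ≠ p)
    (hprev : m - 1 ≠ p ∨ 0 < b p) : greenCoeff a b m < 0 := by
  obtain ⟨hm1, hmn⟩ := mem_Icc.mp hm
  refine greenCoeff_neg (hW m hm) ?_
  rcases lt_or_gt_of_ne hmp with h | h
  · exact mul_pos_of_neg_of_neg (hneg m h) (hneg _ (by omega))
  · refine mul_pos (hpos m (mem_Ioc.mpr ⟨h, hmn⟩)) ?_
    rcases eq_or_ne (m - 1) p with h' | h'
    · rw [h']; exact hprev.resolve_left (not_not.mpr h')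
    · exact hpos _ (mem_Ioc.mpr ⟨by omega, by omega⟩)

include ha hW hp hneg hpos

theorem hasLorentzSignature_greenForm_of_pos (hbp : 0 < b p) :
    HasLorentzSignature n (greenForm n a b) := by
  have hcp : 0 < greenCoeff a b p :=
    greenCoeff_pos (hW p hp) (mul_neg_of_pos_of_neg hbp (hneg _ (by grind)))
  have hcm : ∀ m ∈ (Icc 1 n).erase p, greenCoeff a b m < 0 := fun m hm =>
    greenCoeff_neg_of_ne hW hneg hpos (mem_of_mem_erase hm) (ne_of_mem_erase hm) (.inr hbp)
  have hb : ∀ m ∈ Icc 1 n, b m ≠ 0 := fun m hm => by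
    rcases eq_or_ne m p with rfl | h
    · exact hbp.ne'
    · exact apply_ne_zero_of_ne hneg hpos hm h
  have hc : ∀ m ∈ Icc 1 n, greenCoeff a b m ≠ 0 := fun m hm => by
    rcases eq_or_ne m p with rfl | h
    · exact hcp.ne'
    · exact (hcm m (mem_erase.mpr ⟨h, hm⟩)).ne
  set y := fun m => √|greenCoeff a b m| • tailSum n b m
  have hy : ∀ m lam, y m lam ^ 2 = |greenCoeff a b m| * tailSum n b m lam ^ 2 := fun m lam => by
    simp only [y, LinearMap.smul_apply, smul_eq_mul, mul_pow, sq_sqrt (abs_nonneg _)]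
  refine ⟨y, p, hp, fun lam h j hj => ?_, fun lam => ?_⟩
  · refine eq_zero_of_tailSum_eq_zero (fun m hm => ?_) hj (hb j hj)
    simpa [y, hc m hm] using h m hm
  · have hcross : ∑ m ∈ Icc 1 n,
        (if b m = 0 then 2 * a m * lam m * tailSum n b (m + 1) lam else 0) = 0 :=
      sum_eq_zero fun m hm => if_neg (hb m hm)
    rw [greenForm_eq ha, hcross, add_zero, ← add_sum_erase _ _ hp, hy, abs_of_pos hcp,
      sub_eq_add_neg, ← sum_neg_distrib]
    congr 1
    refine sum_congr rfl fun m hm => ?_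
    rw [hy, abs_of_neg (hcm m hm)]
    ring

theorem hasLorentzSignature_greenForm_of_eq_zero (hbp : b p = 0) (hpn : p < n) :
    HasLorentzSignature n (greenForm n a b) := by
  obtain ⟨hp1, -⟩ := mem_Icc.mp hp
  have hp' : p + 1 ∈ (Icc 1 n).erase p := mem_erase.mpr ⟨by omega, mem_Icc.mpr ⟨by omega, hpn⟩⟩
  have hap : a p ≠ 0 := by
    have := hW p hp
    rw [hbp, mul_zero, sub_zero] at this
    exact left_ne_zero_of_mul this.ne
  have hcm : ∀ m ∈ ((Icc 1 n).erase p).erase (p + 1), greenCoeff a b m < 0 := fun m hm =>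
    greenCoeff_neg_of_ne hW hneg hpos (mem_of_mem_erase (mem_of_mem_erase hm))
      (ne_of_mem_erase (mem_of_mem_erase hm)) (.inl (by have := ne_of_mem_erase hm; omega))
  -- `y_p² - y_{p+1}² = 2 a_p λ_p ρ_{p+1} + c ρ_{p+1}²` absorbs the cross term left at `b_p = 0`.
  set c := greenCoeff a b p + greenCoeff a b (p + 1)
  set y : ℕ → Module.Dual ℝ (ℕ → ℝ) := fun m =>
    if m = p then a p • LinearMap.proj p + ((c + 1) / 2) • tailSum n b (p + 1)
    else if m = p + 1 then a p • LinearMap.proj p + ((c - 1) / 2) • tailSum n b (p + 1)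
    else √|greenCoeff a b m| • tailSum n b m
  have hyp : ∀ lam, y p lam = a p * lam p + (c + 1) / 2 * tailSum n b (p + 1) lam := by
    simp [y]
  have hyp' : ∀ lam, y (p + 1) lam = a p * lam p + (c - 1) / 2 * tailSum n b (p + 1) lam := by
    simp [y]
  have hym : ∀ m ∈ ((Icc 1 n).erase p).erase (p + 1), ∀ lam,
      y m lam = √|greenCoeff a b m| * tailSum n b m lam := fun m hm lam => by
    simp [y, ne_of_mem_erase hm, ne_of_mem_erase (mem_of_mem_erase hm)]
  have hρp : ∀ lam, tailSum n b p lam = tailSum n b (p + 1) lam := fun lam => by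
    rw [tailSum_eq_add hpn.le, hbp, zero_mul, zero_add]
  refine ⟨y, p, hp, fun lam h j hj => ?_, fun lam => ?_⟩
  · have hρ' : tailSum n b (p + 1) lam = 0 := by
      linear_combination h p hp - h (p + 1) (mem_of_mem_erase hp') - hyp lam + hyp' lam
    have hlamp : lam p = 0 := by
      have := h p hp
      rw [hyp, hρ', mul_zero, add_zero] at this
      exact (mul_eq_zero.mp this).resolve_left hap
    have hρ : ∀ m ∈ Icc 1 n, tailSum n b m lam = 0 := fun m hm => by
      by_cases hmp : m = p
      · rw [hmp, hρp, hρ']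
      by_cases hmp' : m = p + 1
      · rw [hmp', hρ']
      have hm' : m ∈ ((Icc 1 n).erase p).erase (p + 1) := by simp [hmp, hmp', mem_Icc.mp hm]
      have := h m hm
      rw [hym m hm' lam] at this
      exact (mul_eq_zero.mp this).resolve_left (by simpa using (hcm m hm').ne)
    rcases eq_or_ne j p with rfl | hjp
    · exact hlamp
    · exact eq_zero_of_tailSum_eq_zero hρ hj (apply_ne_zero_of_ne hneg hpos hj hjp)
  · have hcross : ∑ m ∈ Icc 1 n,
        (if b m = 0 then 2 * a m * lam m * tailSum n b (m + 1) lam else 0)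
          = 2 * a p * lam p * tailSum n b (p + 1) lam := by
      rw [sum_eq_single_of_mem p hp fun m hm hmp => if_neg (apply_ne_zero_of_ne hneg hpos hm hmp),
        if_pos hbp]
    rw [greenForm_eq ha, hcross, ← add_sum_erase _ _ hp, ← add_sum_erase _ _ hp',
      ← add_sum_erase _ _ hp', hyp, hyp', hρp]
    have hrest : ∑ m ∈ ((Icc 1 n).erase p).erase (p + 1), greenCoeff a b m * tailSum n b m lam ^ 2
        = -∑ m ∈ ((Icc 1 n).erase p).erase (p + 1), y m lam ^ 2 := by
      rw [← sum_neg_distrib]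
      refine sum_congr rfl fun m hm => ?_
      rw [hym m hm, mul_pow, sq_sqrt (abs_nonneg _), abs_of_neg (hcm m hm)]
      ring
    rw [hrest]
    ring

end GreenSignature

theorem hasLorentzSignature_greenForm {n : ℕ} {a b : ℕ → ℝ} (ha : a 0 = 0)
    (hW : ∀ m ∈ Icc 1 n, a m * b (m - 1) - a (m - 1) * b m < 0) {p : ℕ} (hp : p ∈ Icc 1 n)
    (hneg : ∀ m < p, b m < 0) (hpos : ∀ m ∈ Ioc p n, 0 < b m) (hbp : 0 ≤ b p) (hbn : 0 < b n) :
    HasLorentzSignature n (greenForm n a b) := by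
  rcases hbp.lt_or_eq with hbp | hbp
  · exact hasLorentzSignature_greenForm_of_pos ha hW hp hneg hpos hbp
  · refine hasLorentzSignature_greenForm_of_eq_zero ha hW hp hneg hpos hbp.symm ?_
    exact lt_of_le_of_ne (mem_Icc.mp hp).2 fun h => by rw [h] at hbp; exact hbn.ne hbp

lemma sin_mul_sin_sub_sub_sin_mul_sin_sub (α x y : ℝ) :
    sin x * sin (α - y) - sin y * sin (α - x) = sin α * sin (x - y) := by
  simp only [sin_sub]
  ring

lemma sin_neg_of_pi_lt_of_lt_two_pi {x : ℝ} (h₁ : π < x) (h₂ : x < 2 * π) : sin x < 0 := by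
  have := sin_pos_of_pos_of_lt_pi (x := x - π) (by linarith) (by linarith)
  rw [sin_sub_pi] at this
  linarith

lemma exists_sin_sign_change {ψ : ℕ → ℝ} {n : ℕ} (hψ : StrictAntiOn ψ (Set.Iic n))
    (h0 : π < ψ 0) (h0' : ψ 0 < 2 * π) (hn : 0 < ψ n) (hn' : ψ n < π) :
    ∃ p ∈ Icc 1 n, (∀ m < p, sin (ψ m) < 0) ∧ (∀ m ∈ Ioc p n, 0 < sin (ψ m)) ∧
      0 ≤ sin (ψ p) := by
  have hex : ∃ m, ψ m ≤ π := ⟨n, hn'.le⟩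
  set p := Nat.find hex
  have hpn : p ≤ n := Nat.find_le hn'.le
  have hbound : ∀ m ≤ n, 0 < ψ m ∧ ψ m < 2 * π := fun m hm =>
    ⟨hn.trans_le (hψ.antitoneOn hm (le_refl n) hm),
      (hψ.antitoneOn (Nat.zero_le n) hm (Nat.zero_le m)).trans_lt h0'⟩
  refine ⟨p, mem_Icc.mpr ⟨Nat.one_le_iff_ne_zero.mpr fun h => ?_, hpn⟩, fun m hm => ?_,
    fun m hm => ?_, sin_nonneg_of_nonneg_of_le_pi (hbound p hpn).1.le (Nat.find_spec hex)⟩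
  · have hp0 : ψ p ≤ π := Nat.find_spec hex
    rw [h] at hp0
    exact hp0.not_gt h0
  · have hm' : m ≤ n := by omega
    exact sin_neg_of_pi_lt_of_lt_two_pi (not_le.mp (Nat.find_min hex hm)) (hbound m hm').2
  · obtain ⟨hpm, hmn⟩ := mem_Ioc.mp hm
    exact sin_pos_of_pos_of_lt_pi (hbound m hmn).1
      ((hψ hpn hmn hpm).trans_le (Nat.find_spec hex))

section Angles

variable {θ : ℕ → ℝ}

lemma phiAng_zero : phiAng θ 0 = 0 := by simp [phiAng]

lemma phiAng_sub_phiAng {j k : ℕ} (hjk : j ≤ k) :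
    phiAng θ k - phiAng θ j = ∑ a ∈ Ioc j k, θ a := by
  have hIoc : ∀ m, phiAng θ m = ∑ a ∈ Ioc 0 m, θ a := fun m => by
    rw [phiAng, ← Icc_add_one_left_eq_Ioc, zero_add]
  rw [hIoc, hIoc, ← sum_Ioc_consecutive θ (Nat.zero_le j) hjk, add_sub_cancel_left]

lemma phiAng_sub_phiAng_pred {m : ℕ} (hm : 1 ≤ m) : phiAng θ m - phiAng θ (m - 1) = θ m := by
  rw [phiAng_sub_phiAng (Nat.sub_le m 1), ← Icc_add_one_left_eq_Ioc, Nat.sub_add_cancel hm,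
    Icc_self, sum_singleton]

lemma strictMonoOn_phiAng {N : ℕ} (hθ : ∀ k, 1 ≤ k → k ≤ N → 0 < θ k) :
    StrictMonoOn (phiAng θ) (Set.Iic N) := fun j _ k hk hjk => by
  rw [← sub_pos, phiAng_sub_phiAng hjk.le]
  exact sum_pos (fun a ha => hθ a (by simp at ha; omega) (by simp at ha; grind))
    ⟨k, by simp [hjk]⟩

lemma Qform_eq_greenForm {N : ℕ} (hφ : phiAng θ N = 2 * π) (lam : ℕ → ℝ) :
    Qform N θ lam = (2 * sin (θ N))⁻¹ * greenForm (N - 2) (fun j => sin (phiAng θ j))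
      (fun j => sin (phiAng θ (N - 1) - phiAng θ j)) lam := by
  simp only [Qform, greenForm, tailSum_apply, hφ, sin_two_pi_sub]
  rw [mul_sum, mul_sum, ← sum_sub_distrib]
  refine sum_congr rfl fun j _ => ?_
  simp only [mul_add, mul_sum]
  rw [sub_eq_add_neg, ← sum_neg_distrib]
  congr 1
  · ring
  · exact sum_congr rfl fun _ _ => by ring

end Angles

/-- Under the positivity condition (for `N ≥ 4`), the signed-area quadratic form has
signature `(1, N-3)`: in some basis of `ℝ^{N-2}` it is `x_1² - x_2² - ⋯ - x_{N-2}²`. -/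
theorem stmt3 (N : ℕ) (hN : 4 ≤ N) (θ : ℕ → ℝ)
    (hθ : ∀ k, 1 ≤ k → k ≤ N → θ k ∈ Set.Ioo 0 Real.pi)
    (hsum : ∑ k ∈ Finset.Icc 1 N, θ k = 2 * Real.pi) :
    ∃ b : Module.Basis (Fin 1 ⊕ Fin (N-3)) ℝ (Fin (N-2) → ℝ),
      ∀ x : Fin (N-2) → ℝ,
        Qform N θ (fun k => if h : 1 ≤ k ∧ k ≤ N - 2 then x ⟨k - 1, by omega⟩ else 0)
          = (b.repr x (Sum.inl 0))^2 - ∑ i : Fin (N-3), (b.repr x (Sum.inr i))^2 := by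
  have hsin : ∀ k, 1 ≤ k → k ≤ N → 0 < sin (θ k) := fun k h1 h2 =>
    sin_pos_of_pos_of_lt_pi (hθ k h1 h2).1 (hθ k h1 h2).2
  have hφN : phiAng θ N = 2 * π := hsum
  have hφ : phiAng θ (N - 1) = 2 * π - θ N := by
    linarith [phiAng_sub_phiAng_pred (θ := θ) (m := N) (by omega)]
  have hψ : StrictAntiOn (fun m => phiAng θ (N - 1) - phiAng θ m) (Set.Iic (N - 2)) :=
    fun j hj k hk hjk => sub_lt_sub_left ((strictMonoOn_phiAng fun k h1 h2 => (hθ k h1 h2).1)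
      (Set.mem_Iic.mpr (by grind)) (Set.mem_Iic.mpr (by grind)) hjk) _
  have hψ0 : phiAng θ (N - 1) - phiAng θ 0 = 2 * π - θ N := by rw [hφ, phiAng_zero, sub_zero]
  have hψn : phiAng θ (N - 1) - phiAng θ (N - 2) = θ (N - 1) := by
    rw [show N - 2 = N - 1 - 1 by omega, phiAng_sub_phiAng_pred (by omega)]
  obtain ⟨p, hp, hneg, hpos, hbp⟩ := exists_sin_sign_change hψ
    (by rw [hψ0]; linarith [(hθ N (by omega) le_rfl).2])
    (by rw [hψ0]; linarith [(hθ N (by omega) le_rfl).1])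
    (by rw [hψn]; exact (hθ (N - 1) (by omega) (by omega)).1)
    (by rw [hψn]; exact (hθ (N - 1) (by omega) (by omega)).2)
  have hW : ∀ m ∈ Icc 1 (N - 2), sin (phiAng θ m) * sin (phiAng θ (N - 1) - phiAng θ (m - 1))
      - sin (phiAng θ (m - 1)) * sin (phiAng θ (N - 1) - phiAng θ m) < 0 := fun m hm => by
    obtain ⟨hm1, hmN⟩ := mem_Icc.mp hm
    rw [sin_mul_sin_sub_sub_sin_mul_sin_sub, hφ, sin_two_pi_sub, phiAng_sub_phiAng_pred hm1,
      neg_mul, neg_lt_zero]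
    exact mul_pos (hsin N (by omega) le_rfl) (hsin m hm1 (by omega))
  have hgreen := hasLorentzSignature_greenForm (by simp [phiAng_zero]) hW hp hneg hpos hbp
    (by rw [hψn]; exact hsin (N - 1) (by omega) (by omega))
  have hQ : HasLorentzSignature (N - 2) (Qform N θ) := by
    rw [funext (Qform_eq_greenForm hφN)]
    exact hgreen.const_mul (inv_pos.mpr (mul_pos two_pos (hsin N (by omega) le_rfl)))
  exact hQ.exists_basis (by omega)
end

section
/- Assume the positivity condition θ_k ∈ (0,π) for all 1 ≤ k ≤ N, ∑_{k=1}^N θ_k = 2π, and N ≥ 5. Suppose there exists ℓ with 1 ≤ ℓ ≤ N−3 such that φ_{N−1} = φ_ℓ + π (equivalently, sin(φ_{N−1} − φ_ℓ) = 0). Then: v_j > 0 for 1 ≤ j ≤ ℓ; w_j < 0 for 1 ≤ j < ℓ; w_ℓ = 0; and w_j > 0 for ℓ < j ≤ N−2. -/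
/-- Signs of the coefficients `v_j`, `w_j` near an isotropic ray: if `φ_{N-1} = φ_ℓ + π` for
some `1 ≤ ℓ ≤ N-3`, then `v_j > 0` for `j ≤ ℓ`, `w_j < 0` for `j < ℓ`, `w_ℓ = 0`, and
`w_j > 0` for `ℓ < j ≤ N-2`. -/
theorem stmt12 (N : ℕ) (hN : 5 ≤ N) (θ : ℕ → ℝ)
    (hθ : ∀ k, 1 ≤ k → k ≤ N → θ k ∈ Set.Ioo 0 Real.pi)
    (hsum : ∑ k ∈ Finset.Icc 1 N, θ k = 2 * Real.pi)
    (ℓ : ℕ) (hℓ1 : 1 ≤ ℓ) (hℓ2 : ℓ ≤ N - 3)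
    (hiso : phiAng θ (N-1) = phiAng θ ℓ + Real.pi) :
    (∀ j, 1 ≤ j → j ≤ ℓ → 0 < vvec N θ j) ∧
    (∀ j, 1 ≤ j → j < ℓ → wvec N θ j < 0) ∧
    wvec N θ ℓ = 0 ∧
    (∀ j, ℓ < j → j ≤ N - 2 → 0 < wvec N θ j) := by
  have hNs : (0:ℝ) < Real.sin (θ N) :=
    Real.sin_pos_of_pos_of_lt_pi (hθ N (by omega) le_rfl).1 (hθ N (by omega) le_rfl).2
  have icc_eq : ∀ m : ℕ, Finset.Icc 1 m = Finset.Ioc 0 m := by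
    intro m; ext a; simp only [Finset.mem_Icc, Finset.mem_Ioc]; omega
  have key : ∀ j k : ℕ, j < k → k ≤ N → phiAng θ j < phiAng θ k := by
    intro j k hjk hk
    have hsplit : (∑ a ∈ Finset.Ioc 0 j, θ a) + ∑ a ∈ Finset.Ioc j k, θ a
        = ∑ a ∈ Finset.Ioc 0 k, θ a :=
      Finset.sum_Ioc_consecutive θ (Nat.zero_le j) hjk.le
    have hpos : 0 < ∑ a ∈ Finset.Ioc j k, θ a := by
      refine Finset.sum_pos (fun a ha => ?_) ⟨k, by simp [hjk]⟩
      rw [Finset.mem_Ioc] at ha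
      exact (hθ a (by omega) (by omega)).1
    unfold phiAng
    rw [icc_eq, icc_eq, ← hsplit]
    linarith
  have phi0 : phiAng θ 0 = 0 := by simp [phiAng]
  have hφN : phiAng θ N = 2 * Real.pi := hsum
  have hN1 : phiAng θ (N-1) < 2 * Real.pi := hφN ▸ key (N-1) N (by omega) le_rfl
  have hℓπ : phiAng θ ℓ < Real.pi := by rw [hiso] at hN1; linarith
  refine ⟨?_, ?_, ?_, ?_⟩
  · intro j hj1 hj2
    have h1 : 0 < phiAng θ j := by
      have := key 0 j (by omega) (by omega); rwa [phi0] at this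
    have h2 : phiAng θ j ≤ phiAng θ ℓ := by
      rcases eq_or_lt_of_le hj2 with h | h
      · exact h ▸ le_rfl
      · exact (key j ℓ h (by omega)).le
    unfold vvec
    rw [hφN, show 2 * Real.pi - phiAng θ j = -(phiAng θ j - 2 * Real.pi) by ring,
      Real.sin_neg, Real.sin_sub_two_pi, neg_neg]
    exact div_pos (Real.sin_pos_of_pos_of_lt_pi h1 (lt_of_le_of_lt h2 hℓπ)) hNs
  · intro j hj1 hj2
    have h1 : 0 < phiAng θ j := by
      have := key 0 j (by omega) (by omega); rwa [phi0] at this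
    have hd : 0 < phiAng θ ℓ - phiAng θ j := sub_pos.mpr (key j ℓ hj2 (by omega))
    have hd2 : phiAng θ ℓ - phiAng θ j < Real.pi := by linarith
    unfold wvec
    rw [hiso, show phiAng θ ℓ + Real.pi - phiAng θ j
        = (phiAng θ ℓ - phiAng θ j) + Real.pi by ring, Real.sin_add_pi]
    exact div_neg_of_neg_of_pos (neg_lt_zero.mpr (Real.sin_pos_of_pos_of_lt_pi hd hd2)) hNs
  · unfold wvec
    rw [hiso, show phiAng θ ℓ + Real.pi - phiAng θ ℓ = Real.pi by ring, Real.sin_pi, zero_div]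
  · intro j hj1 hj2
    have hd : 0 < phiAng θ j - phiAng θ ℓ := sub_pos.mpr (key ℓ j hj1 (by omega))
    have hd2 : phiAng θ j - phiAng θ ℓ < Real.pi := by
      have := key j (N-1) (by omega) (by omega)
      rw [hiso] at this; linarith
    unfold wvec
    rw [hiso, show phiAng θ ℓ + Real.pi - phiAng θ j
        = (phiAng θ ℓ - phiAng θ j) + Real.pi by ring, Real.sin_add_pi,
      show phiAng θ ℓ - phiAng θ j = -(phiAng θ j - phiAng θ ℓ) by ring,
      Real.sin_neg, neg_neg]
    exact div_pos (Real.sin_pos_of_pos_of_lt_pi hd hd2) hNs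
end
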